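/- (Derivative of the temporal Godunov–Boillat potential with respect to θ̃.) At every state Υ with θ̃ < 0, the partial derivative of X⁰ with respect to the scalar variable θ̃ equals −p̂(θ, ψ(Υ)) + θ·p̂_θ(θ, ψ(Υ)) + ½θ|ũ|²·p̂_ψ(θ, ψ(Υ)) (which equals the total energy density ρe + ½ρ|u|² under the thermodynamic identities p̂_ψ = ρθ and θp̂_θ = ρe + p). -/

import Mathlib

noncomputable section

/-- The extended thermodynamical potential
`ψ(Υ) = ψ̃ + ½θ|ũ|² + ½τ₁‖Σ̃‖² + ½τ₂σ̃² + ½τ₀|q̃|²` with `θ = -1/θ̃`. -/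
def psiVal (τ0 τ1 τ2 : ℝ) (ψt : ℝ) (ut : Fin 3 → ℝ) (θt : ℝ)
    (St : Matrix (Fin 3) (Fin 3) ℝ) (σt : ℝ) (qt : Fin 3 → ℝ) : ℝ :=
  ψt + (1/2) * (-1/θt) * (∑ i, (ut i)^2) + (1/2) * τ1 * (∑ j, ∑ k, (St j k)^2)
    + (1/2) * τ2 * σt^2 + (1/2) * τ0 * (∑ i, (qt i)^2)

/-- The temporal Godunov–Boillat potential `X⁰(Υ) = p̂(θ, ψ(Υ))/θ`, `θ = -1/θ̃`. -/
def X0 (phat : ℝ × ℝ → ℝ) (τ0 τ1 τ2 : ℝ) (ψt : ℝ) (ut : Fin 3 → ℝ) (θt : ℝ)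
    (St : Matrix (Fin 3) (Fin 3) ℝ) (σt : ℝ) (qt : Fin 3 → ℝ) : ℝ :=
  phat (-1/θt, psiVal τ0 τ1 τ2 ψt ut θt St σt qt) / (-1/θt)

/-- The spatial Godunov–Boillat potential
`X¹(Υ) = p̂(θ, ψ(Υ)) ũ₁ + θ((Σ̃ũ)₁ + σ̃ũ₁ + q̃₁)`, `θ = -1/θ̃`. -/
def X1 (phat : ℝ × ℝ → ℝ) (τ0 τ1 τ2 : ℝ) (ψt : ℝ) (ut : Fin 3 → ℝ) (θt : ℝ)
    (St : Matrix (Fin 3) (Fin 3) ℝ) (σt : ℝ) (qt : Fin 3 → ℝ) : ℝ :=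
  phat (-1/θt, psiVal τ0 τ1 τ2 ψt ut θt St σt qt) * ut 0
    + (-1/θt) * ((∑ j, St 0 j * ut j) + σt * ut 0 + qt 0)

/-- Partial derivative `p̂_ψ` of `p̂` with respect to its second slot. -/
def pPsi (phat : ℝ × ℝ → ℝ) (a b : ℝ) : ℝ := deriv (fun s => phat (a, s)) b

/-- Partial derivative `p̂_θ` of `p̂` with respect to its first slot. -/
def pTheta (phat : ℝ × ℝ → ℝ) (a b : ℝ) : ℝ := deriv (fun t => phat (t, b)) a

/- Writing `θ = -1/θ̃`, one has `X⁰ = -θ̃ · p̂(θ, ψ)` and `dθ/dθ̃ = θ²`, while `ψ` depends on `θ̃`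
only through `½θ|ũ|²`. The product rule and the chain rule then give
`∂X⁰/∂θ̃ = -p̂ - θ̃θ² (p̂_θ + ½|ũ|² p̂_ψ)`, and `-θ̃θ² = θ`. -/

section Calculus

variable {𝕜 F : Type*} [NontriviallyNormedField 𝕜] [NormedAddCommGroup F] [NormedSpace 𝕜 F]

theorem HasFDerivAt.deriv_comp_prodMk_left {f : 𝕜 × 𝕜 → F} {f' : 𝕜 × 𝕜 →L[𝕜] F} {a b : 𝕜}
    (hf : HasFDerivAt f f' (a, b)) : deriv (fun t => f (t, b)) a = f' (1, 0) := by
  have hline : HasDerivAt (fun t => (t, b)) ((1 : 𝕜), (0 : 𝕜)) a :=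
    (hasDerivAt_id a).prodMk (hasDerivAt_const a b)
  exact (hf.comp_hasDerivAt a hline).deriv

theorem HasFDerivAt.deriv_comp_prodMk_right {f : 𝕜 × 𝕜 → F} {f' : 𝕜 × 𝕜 →L[𝕜] F} {a b : 𝕜}
    (hf : HasFDerivAt f f' (a, b)) : deriv (fun t => f (a, t)) b = f' (0, 1) := by
  have hline : HasDerivAt (fun t => (a, t)) ((0 : 𝕜), (1 : 𝕜)) b :=
    (hasDerivAt_const b a).prodMk (hasDerivAt_id b)
  exact (hf.comp_hasDerivAt b hline).deriv

theorem DifferentiableAt.hasDerivAt_comp_prodMk {f : 𝕜 × 𝕜 → F} {g h : 𝕜 → 𝕜}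
    {g' h' x : 𝕜} (hf : DifferentiableAt 𝕜 f (g x, h x)) (hg : HasDerivAt g g' x)
    (hh : HasDerivAt h h' x) :
    HasDerivAt (fun s => f (g s, h s))
      (g' • deriv (fun t => f (t, h x)) (g x) + h' • deriv (fun t => f (g x, t)) (h x)) x := by
  have hfd := hf.hasFDerivAt
  have hsplit : ((g', h') : 𝕜 × 𝕜) = g' • ((1 : 𝕜), (0 : 𝕜)) + h' • ((0 : 𝕜), (1 : 𝕜)) := by
    simp
  rw [hfd.deriv_comp_prodMk_left, hfd.deriv_comp_prodMk_right, ← map_smul, ← map_smul,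
    ← map_add, ← hsplit]
  exact hfd.comp_hasDerivAt x (hg.prodMk hh)

theorem hasDerivAt_neg_one_div {x : 𝕜} (hx : x ≠ 0) :
    HasDerivAt (fun s : 𝕜 => -1 / s) ((-1 / x) ^ 2) x := by
  have hfun : (fun s : 𝕜 => -1 / s) = fun s => -s⁻¹ := by
    funext s
    rw [neg_div, one_div]
  rw [hfun]
  exact (hasDerivAt_inv hx).fun_neg.congr_deriv (by field_simp)

end Calculus

theorem hasDerivAt_psiVal_thetaTilde (τ0 τ1 τ2 ψt : ℝ) (ut : Fin 3 → ℝ)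
    (St : Matrix (Fin 3) (Fin 3) ℝ) (σt : ℝ) (qt : Fin 3 → ℝ) {θt : ℝ} (hθ : θt ≠ 0) :
    HasDerivAt (fun s => psiVal τ0 τ1 τ2 ψt ut s St σt qt)
      ((1 / 2) * (-1 / θt) ^ 2 * ∑ i, ut i ^ 2) θt := by
  unfold psiVal
  exact (((((hasDerivAt_neg_one_div hθ).const_mul (1 / 2)).mul_const _).const_add ψt).add_const
    _ |>.add_const _).add_const _

/-- Division by `-1/θ̃` is multiplication by `-θ̃`, also at the junk value `θ̃ = 0`. -/
theorem X0_eq_neg_mul (phat : ℝ × ℝ → ℝ) (τ0 τ1 τ2 ψt : ℝ) (ut : Fin 3 → ℝ) (θt : ℝ)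
    (St : Matrix (Fin 3) (Fin 3) ℝ) (σt : ℝ) (qt : Fin 3 → ℝ) :
    X0 phat τ0 τ1 τ2 ψt ut θt St σt qt
      = -θt * phat (-1 / θt, psiVal τ0 τ1 τ2 ψt ut θt St σt qt) := by
  rw [X0, div_div_eq_mul_div, div_neg, div_one]
  ring

theorem X0_deriv_thetaTilde_general
    (phat : ℝ × ℝ → ℝ) (hp : ContDiff ℝ 2 phat)
    (τ0 τ1 τ2 : ℝ)
    (ψt : ℝ) (ut : Fin 3 → ℝ) (θt : ℝ) (St : Matrix (Fin 3) (Fin 3) ℝ)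
    (σt : ℝ) (qt : Fin 3 → ℝ) (hθ : θt < 0) :
    HasDerivAt (fun s => X0 phat τ0 τ1 τ2 ψt ut s St σt qt)
      (-phat (-1/θt, psiVal τ0 τ1 τ2 ψt ut θt St σt qt)
        + (-1/θt) * pTheta phat (-1/θt) (psiVal τ0 τ1 τ2 ψt ut θt St σt qt)
        + (1/2) * (-1/θt) * (∑ i, (ut i)^2)
            * pPsi phat (-1/θt) (psiVal τ0 τ1 τ2 ψt ut θt St σt qt)) θt := by
  have hθ0 : θt ≠ 0 := hθ.ne
  have hphat : HasDerivAt (fun s => phat (-1 / s, psiVal τ0 τ1 τ2 ψt ut s St σt qt))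
      ((-1 / θt) ^ 2 * pTheta phat (-1 / θt) (psiVal τ0 τ1 τ2 ψt ut θt St σt qt)
        + (1 / 2) * (-1 / θt) ^ 2 * (∑ i, ut i ^ 2)
          * pPsi phat (-1 / θt) (psiVal τ0 τ1 τ2 ψt ut θt St σt qt)) θt :=
    (hp.differentiable two_ne_zero).differentiableAt.hasDerivAt_comp_prodMk
      (hasDerivAt_neg_one_div hθ0) (hasDerivAt_psiVal_thetaTilde τ0 τ1 τ2 ψt ut St σt qt hθ0)
  simp_rw [X0_eq_neg_mul]
  refine ((hasDerivAt_id' θt).fun_neg.fun_mul hphat).congr_deriv ?_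
  field_simp
  ring

/-- Derivative of the temporal Godunov–Boillat potential with respect to `θ̃`:
`∂X⁰/∂θ̃ = -p̂(θ, ψ(Υ)) + θ·p̂_θ(θ, ψ(Υ)) + ½θ|ũ|²·p̂_ψ(θ, ψ(Υ))` at every state
with `θ̃ < 0`. -/
theorem X0_deriv_thetaTilde
    (phat : ℝ × ℝ → ℝ) (hp : ContDiff ℝ 2 phat)
    (τ0 τ1 τ2 : ℝ) (hτ0 : 0 < τ0) (hτ1 : 0 < τ1) (hτ2 : 0 < τ2)
    (ψt : ℝ) (ut : Fin 3 → ℝ) (θt : ℝ) (St : Matrix (Fin 3) (Fin 3) ℝ)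
    (σt : ℝ) (qt : Fin 3 → ℝ) (hθ : θt < 0) :
    HasDerivAt (fun s => X0 phat τ0 τ1 τ2 ψt ut s St σt qt)
      (-phat (-1/θt, psiVal τ0 τ1 τ2 ψt ut θt St σt qt)
        + (-1/θt) * pTheta phat (-1/θt) (psiVal τ0 τ1 τ2 ψt ut θt St σt qt)
        + (1/2) * (-1/θt) * (∑ i, (ut i)^2)
            * pPsi phat (-1/θt) (psiVal τ0 τ1 τ2 ψt ut θt St σt qt)) θt :=
  X0_deriv_thetaTilde_general phat hp τ0 τ1 τ2 ψt ut θt St σt qt hθ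

end
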